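/- arXiv:2410.10364 — 3 statements merged into one kernel-verified Lean document; each statement's English description precedes it below -/
import Mathlib

section
/- Let x ∈ ℝⁿ be weakly decreasing and let h lie in the convex hull C(x) of the Sₙ-orbit of x. Then x − h lies in the closed cone of nonnegative linear combinations of the simple roots αᵢ = eᵢ − eᵢ₊₁. -/
/-!
Every point `w·x` of the orbit satisfies `∑ᵢ fᵢ (w·x)ᵢ ≤ ∑ᵢ fᵢ xᵢ` for antitone weights `f`
(rearrangement inequality), and these half-spaces contain the convex hull. With the weights
`1_{j < k}` this says that the partial sums `S_k` of `x − h` are nonnegative, and with the constant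
weights `±1` that `S_n = 0`. Abel summation then gives `x − h = ∑ᵢ S_{i+1} αᵢ`.
-/

/-- The simple root `αᵢ = eᵢ − eᵢ₊₁` of type `A_{n-1}`, as a vector in `ℝⁿ`. -/
def simpleRoot (n : ℕ) (i : Fin (n - 1)) : Fin n → ℝ :=
  fun j => (if (j : ℕ) = (i : ℕ) then 1 else 0) - (if (j : ℕ) = (i : ℕ) + 1 then 1 else 0)

section PermOrbit

variable {ι : Type*} [Fintype ι] [LinearOrder ι] {x h : ι → ℝ}

theorem sum_mul_le_of_mem_convexHull_permOrbit {f : ι → ℝ} (hx : Antitone x) (hf : Antitone f)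
    (hh : h ∈ convexHull ℝ (Set.range fun w : Equiv.Perm ι => x ∘ ⇑w⁻¹)) :
    ∑ i, f i * h i ≤ ∑ i, f i * x i := by
  have hlin : IsLinearMap ℝ fun y : ι → ℝ => ∑ i, f i * y i :=
    ⟨fun a b => by simp only [Pi.add_apply, mul_add, Finset.sum_add_distrib],
     fun c y => by simp only [Pi.smul_apply, smul_eq_mul, Finset.mul_sum, mul_left_comm]⟩
  refine convexHull_min ?_ (convex_halfSpace_le hlin _) hh
  rintro _ ⟨w, rfl⟩
  exact (hf.monovary hx).sum_mul_comp_perm_le_sum_mul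

theorem sum_eq_of_mem_convexHull_permOrbit (hx : Antitone x)
    (hh : h ∈ convexHull ℝ (Set.range fun w : Equiv.Perm ι => x ∘ ⇑w⁻¹)) :
    ∑ i, h i = ∑ i, x i := by
  have hle := sum_mul_le_of_mem_convexHull_permOrbit hx
    (antitone_const : Antitone fun _ : ι => (1 : ℝ)) hh
  have hge := sum_mul_le_of_mem_convexHull_permOrbit hx
    (antitone_const : Antitone fun _ : ι => (-1 : ℝ)) hh
  simp only [one_mul, neg_one_mul, Finset.sum_neg_distrib] at hle hge
  linarith

end PermOrbit

section PartialSum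

variable {n : ℕ}

def partialSum (v : Fin n → ℝ) (k : ℕ) : ℝ :=
  ∑ j : Fin n with j.val < k, v j

theorem partialSum_zero (v : Fin n → ℝ) : partialSum v 0 = 0 := by
  simp [partialSum]

theorem partialSum_self (v : Fin n → ℝ) : partialSum v n = ∑ j, v j := by
  simp [partialSum]

theorem partialSum_succ (v : Fin n → ℝ) (j : Fin n) :
    partialSum v (j + 1) = partialSum v j + v j := by
  have hinsert : Finset.univ.filter (fun i : Fin n => i.val < j.val + 1) =
      insert j (Finset.univ.filter fun i : Fin n => i.val < j.val) := by
    ext i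
    simp only [Finset.mem_filter, Finset.mem_univ, true_and, Finset.mem_insert, Fin.ext_iff]
    omega
  rw [partialSum, partialSum, hinsert, Finset.sum_insert (by simp), add_comm]

theorem partialSum_sub (v w : Fin n → ℝ) (k : ℕ) :
    partialSum (v - w) k = partialSum v k - partialSum w k := by
  simp only [partialSum, Pi.sub_apply, Finset.sum_sub_distrib]

theorem partialSum_eq_sum_mul (v : Fin n → ℝ) (k : ℕ) :
    partialSum v k = ∑ j : Fin n, (if j.val < k then 1 else 0) * v j := by
  simp [partialSum, Finset.sum_filter]

theorem antitone_ite_val_lt (k : ℕ) :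
    Antitone fun j : Fin n => if j.val < k then (1 : ℝ) else 0 := by
  intro i j hij
  rw [Fin.le_def] at hij
  dsimp only
  split_ifs <;> first | omega | norm_num

end PartialSum

theorem sum_smul_simpleRoot {n : ℕ} (S : ℕ → ℝ) (h0 : S 0 = 0) (hn : S n = 0) :
    ∑ i : Fin (n - 1), S (i + 1) • simpleRoot n i = fun j : Fin n => S (j + 1) - S j := by
  funext j
  obtain ⟨m, rfl⟩ : ∃ m, n = m + 1 := ⟨n - 1, by have := j.isLt; omega⟩
  simp only [Finset.sum_apply, Pi.smul_apply, simpleRoot, smul_eq_mul, mul_sub, mul_ite, mul_one,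
    mul_zero, Finset.sum_sub_distrib]
  rw [Fin.sum_univ_eq_sum_range (fun i => if (j : ℕ) = i then S (i + 1) else 0),
    Fin.sum_univ_eq_sum_range (fun i => if (j : ℕ) = i + 1 then S (i + 1) else 0),
    Nat.add_sub_cancel]
  have hlast : (if (j : ℕ) < m then S (j + 1) else 0) = S (j + 1) := by
    split_ifs with hjm
    · rfl
    · rw [show (j : ℕ) = m by omega, hn]
  have hshift := Finset.sum_range_succ' (fun i => if (j : ℕ) = i then S i else 0) m
  simp only [h0, ite_self, add_zero, Finset.sum_ite_eq, Finset.mem_range, if_pos j.isLt] at hshift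
  simp only [Finset.sum_ite_eq, Finset.mem_range, hlast, ← hshift]

/-- If `x ∈ ℝⁿ` is weakly decreasing and `h` lies in the convex hull of the
`Sₙ`-orbit `{w·x : w ∈ Sₙ}` (where `(w·x)ᵢ = x_{w⁻¹ i}`), then `x − h` lies in the closed cone
of nonnegative combinations of the simple roots `αᵢ = eᵢ − eᵢ₊₁`. -/
theorem stmt2 (n : ℕ) (x : Fin n → ℝ) (hx : ∀ i j : Fin n, i ≤ j → x j ≤ x i)
    (h : Fin n → ℝ)
    (hh : h ∈ convexHull ℝ (Set.range fun w : Equiv.Perm (Fin n) => x ∘ ⇑w⁻¹)) :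
    ∃ c : Fin (n - 1) → ℝ, (∀ i, 0 ≤ c i) ∧
      x - h = ∑ i, c i • simpleRoot n i := by
  have hnonneg : ∀ k, 0 ≤ partialSum (x - h) k := fun k => by
    rw [partialSum_sub, partialSum_eq_sum_mul, partialSum_eq_sum_mul, sub_nonneg]
    exact sum_mul_le_of_mem_convexHull_permOrbit hx (antitone_ite_val_lt k) hh
  have htotal : partialSum (x - h) n = 0 := by
    rw [partialSum_sub, partialSum_self, partialSum_self,
      sum_eq_of_mem_convexHull_permOrbit hx hh, sub_self]
  refine ⟨fun i => partialSum (x - h) (i + 1), fun i => hnonneg _, ?_⟩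
  rw [sum_smul_simpleRoot _ (partialSum_zero _) htotal]
  funext j
  rw [partialSum_succ, add_sub_cancel_left]
end

section
/- Let G : ℝⁿ → ℂ be a measurable function whose absolute value is 2πℤⁿ-periodic, and let ĥφ : ℝⁿ → ℂ satisfy the two-scale relation ĥφ(2ξ) = G(ξ) ĥφ(ξ) a.e. together with the orthonormality condition (1/n!) Σ_{q∈2πℤⁿ} |ĥφ(ξ+q)|² = 1 a.e. Then Σ_{p ∈ L/I} |G(ξ+p)|² = 1 for almost every ξ, where L = πℤⁿ, I = 2πℤⁿ, and the sum runs over the 2ⁿ coset representatives p ∈ {0,π}ⁿ. -/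
open Real MeasureTheory

/-!
Put `P(ξ) = Σ_{q ∈ ℤⁿ} |φ̂(ξ + 2πq)|²`, so that `P = n!` almost everywhere. Evaluating `P` at `2ξ`
and applying the two-scale relation gives `P(2ξ) = Σ_{q ∈ ℤⁿ} |G(ξ + πq)|² |φ̂(ξ + πq)|²`.
Splitting `q = ε + 2m` by parity, `ε ∈ {0,1}ⁿ`, and using the `2πℤⁿ`-periodicity of `|G|` turns
this into `Σ_ε |G(ξ + πε)|² P(ξ + πε)`. For almost every `ξ` all of `P(2ξ)` and `P(ξ + πε)` equal
`n!`, since translations and dilations preserve null sets; cancelling `n!` gives the identity.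
-/

namespace Int

def bitEquiv : Bool × ℤ ≃ ℤ where
  toFun p := bit p.1 p.2
  invFun n := (bodd n, div2 n)
  left_inv p := by simp [bodd_bit, div2_bit]
  right_inv := bit_decomp

theorem mul_cast_bit (c : ℝ) (b : Bool) (m : ℤ) :
    c * (bit b m : ℝ) = (if b then c else 0) + 2 * c * m := by
  cases b <;> simp [bit_val] <;> ring

end Int

theorem ENNReal.tsum_pi_int_eq_sum_tsum_bit {ι : Type*} [Fintype ι] [DecidableEq ι] (f : (ι → ℤ) → ENNReal) :
    ∑' q, f q = ∑ ε : ι → Bool, ∑' m : ι → ℤ, f fun i => Int.bit (ε i) (m i) := by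
  let e : (ι → Bool) × (ι → ℤ) ≃ (ι → ℤ) :=
    (Equiv.arrowProdEquivProdArrow ι _ _).symm.trans (Equiv.piCongrRight fun _ => Int.bitEquiv)
  rw [← e.tsum_eq, ENNReal.tsum_prod', tsum_fintype]
  rfl

theorem ae_forall_add_of_ae {X κ : Type*} [MeasurableSpace X] [AddGroup X] [MeasurableAdd X]
    [Countable κ] {μ : Measure X} [μ.IsAddRightInvariant] {P : X → Prop}
    (h : ∀ᵐ x ∂μ, P x) (c : κ → X) : ∀ᵐ x ∂μ, ∀ k, P (x + c k) :=
  ae_all_iff.2 fun k =>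
    (measurePreserving_add_right μ (c k)).quasiMeasurePreserving.tendsto_ae.eventually h

theorem ENNReal.tsum_ofReal_eq_ofReal_of_inv_mul_tsum_eq_one {α : Type*} {f : α → ℝ}
    (hf : ∀ a, 0 ≤ f a) {N : ℝ} (h : N⁻¹ * ∑' a, f a = 1) :
    ∑' a, ENNReal.ofReal (f a) = ENNReal.ofReal N := by
  have hN : N ≠ 0 := by rintro rfl; simp at h
  have hsum : ∑' a, f a = N := ((inv_mul_eq_one₀ hN).1 h).symm
  have hsummable : Summable f :=
    by_contra fun hns => hN (hsum ▸ tsum_eq_zero_of_not_summable hns)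
  rw [← ENNReal.ofReal_tsum_of_nonneg hf hsummable, hsum]

section Periodization

variable {ι 𝕜 : Type*} [NormedDivisionRing 𝕜]

-- Valued in `ℝ≥0∞`, so that no summability side condition is needed.
noncomputable def periodization (φ : (ι → ℝ) → 𝕜) (ξ : ι → ℝ) : ENNReal :=
  ∑' q : ι → ℤ, ‖φ (ξ + fun i => 2 * π * q i)‖ₑ ^ 2

theorem periodization_eq_ofReal {φ : (ι → ℝ) → 𝕜} {ξ : ι → ℝ} {N : ℝ}
    (h : N⁻¹ * ∑' q : ι → ℤ, ‖φ (ξ + fun i => 2 * π * q i)‖ ^ 2 = 1) :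
    periodization φ ξ = ENNReal.ofReal N := by
  rw [← ENNReal.tsum_ofReal_eq_ofReal_of_inv_mul_tsum_eq_one (fun _ => by positivity) h]
  simp only [periodization, ENNReal.ofReal_pow (norm_nonneg _), ofReal_norm]

theorem periodization_two_smul [Fintype ι] [DecidableEq ι] (G φ : (ι → ℝ) → 𝕜) (ξ : ι → ℝ)
    (hGper : ∀ (η : ι → ℝ) (q : ι → ℤ), ‖G (η + fun i => 2 * π * q i)‖ = ‖G η‖)
    (htwoscale : ∀ q : ι → ℤ, φ ((2 : ℝ) • (ξ + fun i => π * q i))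
      = G (ξ + fun i => π * q i) * φ (ξ + fun i => π * q i)) :
    periodization φ ((2 : ℝ) • ξ) = ∑ ε : ι → Bool,
      ‖G (ξ + fun i => if ε i then π else 0)‖ₑ ^ 2
        * periodization φ (ξ + fun i => if ε i then π else 0) := by
  have hdilate : ∀ q : ι → ℤ, (2 : ℝ) • ξ + (fun i => 2 * π * q i)
      = (2 : ℝ) • (ξ + fun i => π * q i) := by
    intro q; funext i; simp only [Pi.add_apply, Pi.smul_apply, smul_eq_mul]; ring
  have hsplit : ∀ (ε : ι → Bool) (m : ι → ℤ),
      (ξ + fun i => π * (Int.bit (ε i) (m i) : ℝ))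
        = (ξ + fun i => if ε i then π else 0) + fun i => 2 * π * m i := by
    intro ε m; funext i; simp only [Pi.add_apply, Int.mul_cast_bit]; ring
  have hGper' : ∀ (η : ι → ℝ) (m : ι → ℤ), ‖G (η + fun i => 2 * π * m i)‖ₑ = ‖G η‖ₑ := by
    intro η m; rw [← ofReal_norm, hGper, ofReal_norm]
  calc periodization φ ((2 : ℝ) • ξ)
      = ∑' q : ι → ℤ, ‖G (ξ + fun i => π * q i)‖ₑ ^ 2 * ‖φ (ξ + fun i => π * q i)‖ₑ ^ 2 := by
        refine tsum_congr fun q => ?_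
        rw [hdilate, htwoscale, enorm_mul, mul_pow]
    _ = ∑ ε : ι → Bool, ∑' m : ι → ℤ, ‖G (ξ + fun i => if ε i then π else 0)‖ₑ ^ 2
          * ‖φ ((ξ + fun i => if ε i then π else 0) + fun i => 2 * π * m i)‖ₑ ^ 2 := by
        rw [ENNReal.tsum_pi_int_eq_sum_tsum_bit]
        simp only [hsplit, hGper']
    _ = _ := by simp only [ENNReal.tsum_mul_left, periodization]

end Periodization

theorem stmt13_general (n : ℕ) (G φh : (Fin n → ℝ) → ℂ)
    (hGper : ∀ (ξ : Fin n → ℝ) (q : Fin n → ℤ),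
      ‖G (ξ + fun i => 2 * π * (q i : ℝ))‖ = ‖G ξ‖)
    (htwoscale : ∀ᵐ ξ : Fin n → ℝ, φh ((2 : ℝ) • ξ) = G ξ * φh ξ)
    (hON : ∀ᵐ ξ : Fin n → ℝ,
      (n.factorial : ℝ)⁻¹ *
        ∑' q : Fin n → ℤ, ‖φh (ξ + fun i => 2 * π * (q i : ℝ))‖ ^ 2 = 1) :
    ∀ᵐ ξ : Fin n → ℝ,
      ∑ ε : Fin n → Bool,
        ‖G (ξ + fun i => if ε i then π else 0)‖ ^ 2 = 1 := by
  have hP : ∀ᵐ ξ, periodization φh ξ = ENNReal.ofReal n.factorial :=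
    hON.mono fun _ => periodization_eq_ofReal
  filter_upwards [ae_forall_add_of_ae htwoscale fun (q : Fin n → ℤ) i => π * q i,
    ae_forall_add_of_ae hP fun (ε : Fin n → Bool) i => if ε i then π else 0,
    (Measure.quasiMeasurePreserving_smul volume two_ne_zero).tendsto_ae.eventually hP]
    with ξ htwoscaleξ hPshift hPdilate
  rw [periodization_two_smul G φh ξ hGper htwoscaleξ] at hPdilate
  simp only [hPshift, ← Finset.sum_mul] at hPdilate
  have hsum : ∑ ε : Fin n → Bool, ‖G (ξ + fun i => if ε i then π else 0)‖ₑ ^ 2 = 1 :=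
    (ENNReal.mul_eq_right (ENNReal.ofReal_pos.2 (by positivity)).ne' ENNReal.ofReal_ne_top).1 hPdilate
  simpa [ENNReal.toReal_sum, ENNReal.pow_ne_top] using congrArg ENNReal.toReal hsum

/-- quadrature-mirror filter identity. If `|G|` is `2πℤⁿ`-periodic,
`φ̂(2ξ) = G(ξ)φ̂(ξ)` a.e., and `(1/n!) Σ_{q∈2πℤⁿ} |φ̂(ξ+q)|² = 1` a.e., then
`Σ_{p ∈ {0,π}ⁿ} |G(ξ+p)|² = 1` for a.e. `ξ`. -/
theorem stmt13 (n : ℕ) (G φh : (Fin n → ℝ) → ℂ) (hG : Measurable G)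
    (hGper : ∀ (ξ : Fin n → ℝ) (q : Fin n → ℤ),
      ‖G (ξ + fun i => 2 * π * (q i : ℝ))‖ = ‖G ξ‖)
    (htwoscale : ∀ᵐ ξ : Fin n → ℝ, φh ((2 : ℝ) • ξ) = G ξ * φh ξ)
    (hON : ∀ᵐ ξ : Fin n → ℝ,
      (n.factorial : ℝ)⁻¹ *
        ∑' q : Fin n → ℤ, ‖φh (ξ + fun i => 2 * π * (q i : ℝ))‖ ^ 2 = 1) :
    ∀ᵐ ξ : Fin n → ℝ,
      ∑ ε : Fin n → Bool,
        ‖G (ξ + fun i => if ε i then π else 0)‖ ^ 2 = 1 :=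
  stmt13_general n G φh hGper htwoscale hON
end

section
/- Given a measurable function g : D → ℂ^r on a measurable set D ⊆ ℝⁿ with |g(ξ)| = 1 for a.e. ξ, there exist measurable functions g¹, …, g^{r−1} : D → ℂ^r such that for a.e. ξ the vectors g(ξ), g¹(ξ), …, g^{r−1}(ξ) form an orthonormal basis of ℂ^r; i.e., one can measurably complete an a.e.-unit measurable vector field to an a.e. unitary matrix-valued function. -/
/-!
Rotate the first standard basis vector `e₀` by the phase `exp (i arg ⟪e₀, g⟫)` into a unit
vector `v` with `⟪v, g⟫` real. For unit vectors with real inner product the Householder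
reflection in `(v - g)ᗮ` maps `v` to `g`; it is unitary and given by an explicit formula that is
measurable in `g`, so its images of the other standard basis vectors, together with `g`, are
measurable and form an orthonormal basis wherever `‖g‖ = 1`.
-/

open MeasureTheory

noncomputable instance (r : ℕ) : MeasurableSpace (EuclideanSpace ℂ (Fin r)) := borel _
instance (r : ℕ) : BorelSpace (EuclideanSpace ℂ (Fin r)) := ⟨rfl⟩

open Complex ComplexConjugate Submodule

section

variable {𝕜 E : Type*} [RCLike 𝕜] [NormedAddCommGroup E] [InnerProductSpace 𝕜 E]

theorem Submodule.reflection_orthogonal_singleton_apply (u x : E) :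
    reflection (𝕜 ∙ u)ᗮ x = x - (2 * (inner 𝕜 u x / (‖u‖ : 𝕜) ^ 2)) • u := by
  rw [reflection_orthogonal_apply, reflection_singleton_apply, mul_smul, two_smul, two_smul]
  abel

theorem Submodule.reflection_sub_of_inner_comm {v w : E} (hnorm : ‖v‖ = ‖w‖)
    (hinner : inner 𝕜 v w = inner 𝕜 w v) : reflection (𝕜 ∙ (v - w))ᗮ v = w := by
  set R : E ≃ₗᵢ[𝕜] E := reflection (𝕜 ∙ (v - w))ᗮ
  suffices R v + R v = w + w by
    apply smul_right_injective E (two_ne_zero : (2 : 𝕜) ≠ 0)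
    simpa [two_smul] using this
  have h₁ : R (v - w) = -(v - w) := reflection_orthogonalComplement_singleton_eq_neg (v - w)
  have h₂ : R (v + w) = v + w := by
    apply reflection_mem_subspace_eq_self
    rw [Submodule.mem_orthogonal_singleton_iff_inner_left, inner_add_left, inner_sub_right,
      inner_sub_right, hinner, inner_self_eq_norm_sq_to_K, inner_self_eq_norm_sq_to_K, hnorm]
    ring
  convert! congr_arg₂ (· + ·) h₂ h₁ using 1
  · simp
  · abel

theorem Measurable.reflection_orthogonal_singleton [MeasurableSpace E] [BorelSpace E]
    [SecondCountableTopology E] {α : Type*} [MeasurableSpace α] {u : α → E}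
    (hu : Measurable u) (x : E) : Measurable fun a => reflection (𝕜 ∙ u a)ᗮ x := by
  simp_rw [reflection_orthogonal_singleton_apply]
  refine measurable_const.sub (Measurable.smul ?_ hu)
  exact measurable_const.mul ((hu.inner measurable_const).div
    ((RCLike.continuous_ofReal.measurable.comp hu.norm).pow_const 2))

theorem Orthonormal.smul {ι : Type*} {v : ι → E} (hv : Orthonormal 𝕜 v) {a : ι → 𝕜}
    (ha : ∀ i, ‖a i‖ = 1) : Orthonormal 𝕜 fun i => a i • v i := by
  classical
  rw [orthonormal_iff_ite] at hv ⊢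
  intro i j
  rw [inner_smul_left, inner_smul_right, hv]
  split_ifs with h
  · subst h
    rw [mul_one, RCLike.conj_mul, ha, RCLike.ofReal_one, one_pow]
  · simp

theorem Orthonormal.update_smul {ι : Type*} [DecidableEq ι] {v : ι → E} (hv : Orthonormal 𝕜 v)
    (i : ι) {a : 𝕜} (ha : ‖a‖ = 1) : Orthonormal 𝕜 (Function.update v i (a • v i)) := by
  convert hv.smul (a := Function.update 1 i a) fun j => ?_ using 1
  · ext j
    rcases eq_or_ne j i with rfl | hj <;> simp [*]
  · rcases eq_or_ne j i with rfl | hj <;> simp [*]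

end

section

variable {E ι : Type*} [NormedAddCommGroup E] [InnerProductSpace ℂ E] [DecidableEq ι]

theorem inner_exp_arg_inner_smul_left (v x : E) :
    inner ℂ (exp (arg (inner ℂ v x) * I) • v) x = ‖inner ℂ v x‖ := by
  set z := inner ℂ v x
  set c := exp (arg z * I)
  calc inner ℂ (c • v) x = conj c * (‖z‖ * c) := by rw [inner_smul_left, norm_mul_exp_arg_mul_I]
    _ = ‖z‖ * (‖c‖ : ℂ) ^ 2 := by rw [mul_left_comm, conj_mul']
    _ = ‖z‖ := by rw [norm_exp_ofReal_mul_I]; simp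

noncomputable def householderCompletion (e : ι → E) (i₀ : ι) (x : E) : ι → E :=
  Function.update
    (fun i => reflection (ℂ ∙ (exp (arg (inner ℂ (e i₀) x) * I) • e i₀ - x))ᗮ (e i)) i₀ x

@[simp]
theorem householderCompletion_self (e : ι → E) (i₀ : ι) (x : E) :
    householderCompletion e i₀ x i₀ = x :=
  Function.update_self ..

theorem orthonormal_householderCompletion {e : ι → E} (he : Orthonormal ℂ e) (i₀ : ι) {x : E}
    (hx : ‖x‖ = 1) : Orthonormal ℂ (householderCompletion e i₀ x) := by
  set c := exp (arg (inner ℂ (e i₀) x) * I)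
  set H : E ≃ₗᵢ[ℂ] E := reflection (ℂ ∙ (c • e i₀ - x))ᗮ
  have hc : ‖c‖ = 1 := norm_exp_ofReal_mul_I _
  have hHx : H (c • e i₀) = x := by
    refine reflection_sub_of_inner_comm ?_ ?_
    · rw [norm_smul, hc, he.1 i₀, hx, one_mul]
    · rw [← inner_conj_symm x, inner_exp_arg_inner_smul_left, conj_ofReal]
  have hx_eq : x = c • (H ∘ e) i₀ := by rw [Function.comp_apply, ← map_smul, hHx]
  have := (he.comp_linearIsometryEquiv H).update_smul i₀ hc
  rwa [← hx_eq] at this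

theorem Measurable.householderCompletion [MeasurableSpace E] [BorelSpace E]
    [SecondCountableTopology E] {α : Type*} [MeasurableSpace α] {g : α → E} (hg : Measurable g)
    (e : ι → E) (i₀ i : ι) : Measurable fun a => householderCompletion e i₀ (g a) i := by
  rcases eq_or_ne i i₀ with rfl | hi
  · simpa using hg
  · simp only [_root_.householderCompletion, Function.update_of_ne hi]
    refine Measurable.reflection_orthogonal_singleton (Measurable.sub ?_ hg) (e i)
    refine Measurable.smul ?_ measurable_const
    exact continuous_exp.measurable.comp
      ((continuous_ofReal.measurable.comp (measurable_arg.comp (measurable_const.inner hg))).mul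
        measurable_const)

end

theorem stmt16_general (n r : ℕ) (hr : 0 < r) (D : Set (Fin n → ℝ))
    (g : (Fin n → ℝ) → EuclideanSpace ℂ (Fin r)) (hg : Measurable g)
    (hnorm : ∀ᵐ ξ ∂(volume.restrict D), ‖g ξ‖ = 1) :
    ∃ G : Fin r → (Fin n → ℝ) → EuclideanSpace ℂ (Fin r),
      (∀ i, Measurable (G i)) ∧ G ⟨0, hr⟩ = g ∧
      ∀ᵐ ξ ∂(volume.restrict D), Orthonormal ℂ (fun i => G i ξ) := by
  let e : Fin r → EuclideanSpace ℂ (Fin r) := fun i => EuclideanSpace.single i 1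
  refine ⟨fun i ξ => householderCompletion e ⟨0, hr⟩ (g ξ) i,
    hg.householderCompletion e _, by simp, ?_⟩
  filter_upwards [hnorm] with ξ hξ
  exact orthonormal_householderCompletion EuclideanSpace.orthonormal_single _ hξ

/-- measurable completion to an a.e. unitary matrix. Given a measurable
set `D ⊆ ℝⁿ` and a measurable `g : D → ℂ^r` with `‖g(ξ)‖ = 1` a.e. on `D`, there are
measurable functions `g¹, …, g^{r−1}` such that for a.e. `ξ ∈ D` the vectors
`g(ξ), g¹(ξ), …, g^{r−1}(ξ)` form an orthonormal basis of `ℂ^r`. -/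
theorem stmt16 (n r : ℕ) (hr : 0 < r) (D : Set (Fin n → ℝ)) (hD : MeasurableSet D)
    (g : (Fin n → ℝ) → EuclideanSpace ℂ (Fin r)) (hg : Measurable g)
    (hnorm : ∀ᵐ ξ ∂(volume.restrict D), ‖g ξ‖ = 1) :
    ∃ G : Fin r → (Fin n → ℝ) → EuclideanSpace ℂ (Fin r),
      (∀ i, Measurable (G i)) ∧ G ⟨0, hr⟩ = g ∧
      ∀ᵐ ξ ∂(volume.restrict D), Orthonormal ℂ (fun i => G i ξ) :=
  stmt16_general n r hr D g hg hnorm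
end
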